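/- arXiv:1408.5615 — 2 statements merged into one kernel-verified Lean document; each statement's English description precedes it below -/
import Mathlib

section
/- Let m ≥ 2 and n ≥ 1. Then the clique number of SR(m,n) (the maximum cardinality of a set of pairwise adjacent vertices) equals max(m, n+1). -/
/-!
A clique with at least three vertices is either a *line*, all of whose vertices agree with a
fixed one outside two coordinates `a, b` (so it has at most `n + 1` vertices, one for each value
of coordinate `b`), or a *star* `{w + δ (e_r - e_a) | r}` for fixed `w, a, δ` (so it has at most
`m` vertices). This comes from looking at triangles: if `y = x + δ (e_b - e_a)`, then a common
neighbour of `x` and `y` either lies on the line through them, or loses the same `δ` at `a`, or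
gains the same `δ` at `b`; any other position makes it differ from `y` in three coordinates.
Conversely `{a e₀ + (n - a) e₁ | a ≤ n}` and `{(n - 1) e₀ + e_i | i}` are cliques.
-/

open Matrix Polynomial

/-- Vertices of the simplicial rook graph: nonnegative integer vectors of length `m` summing to `n`. -/
abbrev SRVertex (m n : ℕ) : Type := {x : Fin m → ℕ // ∑ i, x i = n}

instance (m n : ℕ) : Fintype (SRVertex m n) :=
  Fintype.subtype (Finset.Nat.antidiagonalTuple m n) fun _ =>
    Finset.Nat.mem_antidiagonalTuple

/-- The simplicial rook graph `SR(m,n)`. -/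
def SR (m n : ℕ) : SimpleGraph (SRVertex m n) where
  Adj x y := (Finset.univ.filter fun i => x.1 i ≠ y.1 i).card = 2
  symm := by
    constructor
    intro x y h
    have : (Finset.univ.filter fun i => y.1 i ≠ x.1 i)
        = (Finset.univ.filter fun i => x.1 i ≠ y.1 i) := by
      apply Finset.filter_congr
      intro i _
      simp [ne_comm]
    rw [this]; exact h
  loopless := by
    constructor
    intro x h
    simp at h

instance (m n : ℕ) : DecidableRel (SR m n).Adj := fun x y =>
  inferInstanceAs (Decidable ((Finset.univ.filter fun i => x.1 i ≠ y.1 i).card = 2))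

open Finset

section Transfer

variable {ι : Type*} [DecidableEq ι]

def transfer (i j : ι) (δ : ℤ) : ι → ℤ := Pi.single j δ - Pi.single i δ

lemma transfer_apply (i j l : ι) (δ : ℤ) :
    transfer i j δ l = (if l = j then δ else 0) - (if l = i then δ else 0) := by
  simp [transfer, Pi.single_apply]

@[simp] lemma transfer_self (i : ι) (δ : ℤ) : transfer i i δ = 0 := sub_self _

@[simp] lemma transfer_zero (i j : ι) : transfer i j 0 = 0 := by simp [transfer]

lemma transfer_swap (i j : ι) (δ : ℤ) : transfer j i δ = transfer i j (-δ) := by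
  rw [transfer, transfer, Pi.single_neg, Pi.single_neg]; abel

def IsTransfer (u v : ι → ℤ) : Prop := ∃ i j δ, i ≠ j ∧ δ ≠ 0 ∧ v = u + transfer i j δ

lemma card_filter_ne_eq_two_iff [Fintype ι] {u v : ι → ℤ} (h : ∑ l, u l = ∑ l, v l) :
    #{l | u l ≠ v l} = 2 ↔ IsTransfer u v := by
  constructor
  · intro h2
    obtain ⟨i, j, hij, hD⟩ := card_eq_two.1 h2
    have hD' (l : ι) : u l ≠ v l ↔ l = i ∨ l = j := by
      simpa using congrArg (l ∈ ·) hD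
    have hsum : ∑ l, (v l - u l) = (v i - u i) + (v j - u j) :=
      Fintype.sum_eq_add i j hij fun l hl => by
        rw [sub_eq_zero, eq_comm, ← not_ne_iff, hD' l]; tauto
    rw [sum_sub_distrib, ← h, sub_self] at hsum
    refine ⟨i, j, u i - v i, hij, sub_ne_zero.2 ((hD' i).2 (.inl rfl)), funext fun l => ?_⟩
    simp only [Pi.add_apply, transfer_apply]
    split_ifs with hlj hli hli
    · exact absurd (hli.symm.trans hlj) hij
    · subst hlj; omega
    · subst hli; omega
    · simpa [eq_comm] using (hD' l).not.2 (by tauto)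
  · rintro ⟨i, j, δ, hij, hδ, rfl⟩
    rw [card_eq_two]
    refine ⟨i, j, hij, ext fun l => ?_⟩
    simp only [mem_filter, mem_univ, true_and, mem_insert, mem_singleton, Pi.add_apply,
      transfer_apply]
    split_ifs <;> subst_vars <;> simp_all

lemma IsTransfer.false_of_three_ne {u v : ι → ℤ} (h : IsTransfer u v) {i j k : ι}
    (hij : i ≠ j) (hik : i ≠ k) (hjk : j ≠ k)
    (hi : u i ≠ v i) (hj : u j ≠ v j) (hk : u k ≠ v k) : False := by
  obtain ⟨p, q, γ, -, -, rfl⟩ := h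
  simp only [Pi.add_apply, transfer_apply, ne_eq, left_eq_add] at hi hj hk
  split_ifs at hi hj hk <;> subst_vars <;> simp_all

lemma eq_of_isTransfer_transfer_of_source {x : ι → ℤ} {a b q : ι} {δ γ : ℤ}
    (hab : a ≠ b) (hqa : q ≠ a) (hqb : q ≠ b) (hδ : δ ≠ 0) (hγ : γ ≠ 0)
    (h : IsTransfer (x + transfer a b δ) (x + transfer a q γ)) : γ = δ := by
  by_contra hne
  -- The two vectors already differ at `b` and `q`, so they must agree at `a`.
  refine h.false_of_three_ne hab hqa.symm hqb.symm ?_ ?_ ?_ <;>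
    simp [transfer_apply, hab, hab.symm, hqa, hqb, hqa.symm, hqb.symm] <;> omega

theorem isTransfer_third_vertex {x v : ι → ℤ} {a b : ι} {δ : ℤ} (hab : a ≠ b) (hδ : δ ≠ 0)
    (hxv : IsTransfer x v) (hyv : IsTransfer (x + transfer a b δ) v) :
    (∃ γ, v = x + transfer a b γ) ∨ (∃ r, r ≠ a ∧ r ≠ b ∧ v = x + transfer a r δ) ∨
      (∃ r, r ≠ a ∧ r ≠ b ∧ v = x + transfer r b δ) := by
  obtain ⟨p, q, γ, hpq, hγ, rfl⟩ := hxv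
  have hyv' := hyv
  rw [transfer_swap b a δ] at hyv'
  by_cases hp : p = a ∨ p = b <;> by_cases hq : q = a ∨ q = b
  · left
    rcases hp with rfl | rfl <;> rcases hq with rfl | rfl
    · exact absurd rfl hpq
    · exact ⟨γ, rfl⟩
    · exact ⟨-γ, by rw [transfer_swap]⟩
    · exact absurd rfl hpq
  · push Not at hq
    rcases hp with rfl | rfl
    · right; left
      exact ⟨q, hq.1, hq.2, by
        rw [eq_of_isTransfer_transfer_of_source hab hq.1 hq.2 hδ hγ hyv]⟩
    · right; right
      refine ⟨q, hq.1, hq.2, ?_⟩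
      rw [eq_of_isTransfer_transfer_of_source hab.symm hq.2 hq.1 (neg_ne_zero.2 hδ) hγ hyv',
        transfer_swap, neg_neg]
  · push Not at hp
    rw [transfer_swap q p γ] at hyv hyv' ⊢
    rcases hq with rfl | rfl
    · right; left
      exact ⟨p, hp.1, hp.2, by
        rw [eq_of_isTransfer_transfer_of_source hab hp.1 hp.2 hδ (neg_ne_zero.2 hγ) hyv]⟩
    · right; right
      refine ⟨p, hp.1, hp.2, ?_⟩
      rw [eq_of_isTransfer_transfer_of_source hab.symm hp.2 hp.1 (neg_ne_zero.2 hδ)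
        (neg_ne_zero.2 hγ) hyv', transfer_swap, neg_neg]
  · push Not at hp hq
    exact (hyv.false_of_three_ne hab hp.1.symm hp.2.symm
      (by simp [transfer_apply, hab, hp.1.symm, hq.1.symm]; omega)
      (by simp [transfer_apply, hab.symm, hp.2.symm, hq.2.symm]; omega)
      (by simp [transfer_apply, hp.1, hp.2, hpq]; omega)).elim

section Clique

variable {S : Set (ι → ℤ)} {x : ι → ℤ} {a b : ι} {δ : ℤ}

theorem Set.Pairwise.eq_transfer_of_line (hS : S.Pairwise IsTransfer) {γ : ℤ}
    (hab : a ≠ b) (hδ : δ ≠ 0) (hγ : γ ≠ 0) (hγδ : γ ≠ δ)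
    (hx : x ∈ S) (hy : x + transfer a b δ ∈ S) (hz : x + transfer a b γ ∈ S) :
    ∀ v ∈ S, ∃ ε, v = x + transfer a b ε := by
  intro v hv
  rcases eq_or_ne v x with rfl | hvx
  · exact ⟨0, by simp⟩
  rcases eq_or_ne v (x + transfer a b δ) with rfl | hvy
  · exact ⟨δ, rfl⟩
  rcases eq_or_ne v (x + transfer a b γ) with rfl | hvz
  · exact ⟨γ, rfl⟩
  have hzv := hS hz hv hvz.symm
  rcases isTransfer_third_vertex hab hδ (hS hx hv hvx.symm) (hS hy hv hvy.symm) with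
    hline | ⟨r, hra, hrb, rfl⟩ | ⟨r, hra, hrb, rfl⟩
  · exact hline
  · exact (hzv.false_of_three_ne hab hra.symm hrb.symm
      (by simp [transfer_apply, hab, hra.symm]; omega)
      (by simp [transfer_apply, hab.symm, hrb.symm]; omega)
      (by simp [transfer_apply, hra, hrb]; omega)).elim
  · exact (hzv.false_of_three_ne hab hra.symm hrb.symm
      (by simp [transfer_apply, hab, hra.symm]; omega)
      (by simp [transfer_apply, hab.symm, hrb.symm]; omega)
      (by simp [transfer_apply, hra, hrb]; omega)).elim

theorem Set.Pairwise.eq_transfer_of_star (hS : S.Pairwise IsTransfer) {c : ι}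
    (hab : a ≠ b) (hac : a ≠ c) (hbc : b ≠ c) (hδ : δ ≠ 0)
    (hx : x ∈ S) (hy : x + transfer a b δ ∈ S) (hz : x + transfer a c δ ∈ S) :
    ∀ v ∈ S, ∃ r, v = x + transfer a r δ := by
  intro v hv
  rcases eq_or_ne v x with rfl | hvx
  · exact ⟨a, by simp⟩
  rcases eq_or_ne v (x + transfer a b δ) with rfl | hvy
  · exact ⟨b, rfl⟩
  rcases eq_or_ne v (x + transfer a c δ) with rfl | hvz
  · exact ⟨c, rfl⟩
  have hvz' := hS hv hz hvz
  rcases isTransfer_third_vertex hab hδ (hS hx hv hvx.symm) (hS hy hv hvy.symm) with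
    ⟨γ, rfl⟩ | hstar | ⟨r, hra, hrb, rfl⟩
  · have hγ : γ ≠ 0 := by rintro rfl; simp at hvx
    have hγδ : γ ≠ δ := by rintro rfl; exact hvy rfl
    exact (hvz'.false_of_three_ne hab hac hbc
      (by simp [transfer_apply, hab, hac]; omega)
      (by simp [transfer_apply, hab.symm, hbc]; omega)
      (by simp [transfer_apply, hac.symm, hbc.symm]; omega)).elim
  · obtain ⟨r, -, -, rfl⟩ := hstar
    exact ⟨r, rfl⟩
  · exact (hvz'.false_of_three_ne hab hra.symm hrb.symm
      (by simp [transfer_apply, hab, hac, hra.symm]; omega)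
      (by simp [transfer_apply, hab.symm, hbc, hrb.symm]; omega)
      (by simp [transfer_apply, hra, hrb]; split_ifs <;> omega)).elim

theorem Set.Pairwise.isTransfer_line_or_star (hS : S.Pairwise IsTransfer)
    {y z : ι → ℤ} (hx : x ∈ S) (hy : y ∈ S) (hz : z ∈ S)
    (hxy : x ≠ y) (hxz : x ≠ z) (hyz : y ≠ z) :
    (∃ a b, a ≠ b ∧ ∀ v ∈ S, ∃ ε, v = x + transfer a b ε) ∨
      ∃ w a δ, ∀ v ∈ S, ∃ r, v = w + transfer a r δ := by
  obtain ⟨a, b, δ, hab, hδ, rfl⟩ := hS hx hy hxy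
  rcases isTransfer_third_vertex hab hδ (hS hx hz hxz) (hS hy hz hyz) with
    ⟨γ, rfl⟩ | ⟨r, hra, hrb, rfl⟩ | ⟨r, hra, hrb, rfl⟩
  · have hγ : γ ≠ 0 := by rintro rfl; simp at hxz
    have hγδ : γ ≠ δ := by rintro rfl; exact hyz rfl
    exact .inl ⟨a, b, hab, hS.eq_transfer_of_line hab hδ hγ hγδ hx hy hz⟩
  · exact .inr ⟨x, a, δ, hS.eq_transfer_of_star hab hra.symm hrb.symm hδ hx hy hz⟩
  · rw [transfer_swap b a] at hy
    rw [transfer_swap b r] at hz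
    exact .inr ⟨x, b, -δ,
      hS.eq_transfer_of_star hab.symm hrb.symm hra.symm (neg_ne_zero.2 hδ) hx hy hz⟩

end Clique

end Transfer

lemma SimpleGraph.card_le_cliqueNum_of_pairwise_adj {V α : Type*} [Finite V] [Fintype α]
    {G : SimpleGraph V} (f : α → V) (hf : Pairwise fun a b => G.Adj (f a) (f b)) :
    Fintype.card α ≤ G.cliqueNum := by
  have hinj : f.Injective := fun a b hab => by_contra fun hne => (hf hne).ne hab
  have h := G.isNClique_map_copy_top ⟨⟨f, fun hab => hf hab⟩, hinj⟩
  exact h.card_eq ▸ IsClique.card_le_cliqueNum (tc := h.isClique)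

namespace SRVertex

variable {m n : ℕ}

def toIntVec (x : SRVertex m n) : Fin m → ℤ := fun i => x.1 i

@[simp] lemma toIntVec_apply (x : SRVertex m n) (i : Fin m) : x.toIntVec i = x.1 i := rfl

lemma toIntVec_injective : Function.Injective (toIntVec (m := m) (n := n)) :=
  fun x y h => Subtype.ext <| funext fun i => by simpa using congrFun h i

lemma val_le (x : SRVertex m n) (i : Fin m) : x.1 i ≤ n :=
  calc x.1 i ≤ ∑ j, x.1 j := single_le_sum (fun _ _ => Nat.zero_le _) (mem_univ i)
    _ = n := x.2

lemma sum_toIntVec (x : SRVertex m n) : ∑ i, x.toIntVec i = n := by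
  simp only [toIntVec_apply]; exact_mod_cast x.2

end SRVertex

namespace SR

open SRVertex

variable {m n : ℕ}

lemma adj_iff {x y : SRVertex m n} : (SR m n).Adj x y ↔ IsTransfer x.toIntVec y.toIntVec := by
  rw [← card_filter_ne_eq_two_iff (by rw [sum_toIntVec, sum_toIntVec])]
  simp [SR, toIntVec]

lemma pairwise_isTransfer_of_isClique {s : Set (SRVertex m n)} (hs : (SR m n).IsClique s) :
    (toIntVec '' s).Pairwise IsTransfer :=
  (toIntVec_injective.injOn).pairwise_image.2 fun _ hx _ hy hxy => SR.adj_iff.1 (hs hx hy hxy)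

lemma card_le_of_forall_eq_transfer {s : Finset (SRVertex m n)} {x : Fin m → ℤ} {a b : Fin m}
    (hab : a ≠ b) (hs : ∀ v ∈ s, ∃ ε, v.toIntVec = x + transfer a b ε) : #s ≤ n + 1 := by
  have hb {v : SRVertex m n} {ε : ℤ} (hv : v.toIntVec = x + transfer a b ε) :
      (v.1 b : ℤ) = x b + ε := by
    simpa [transfer_apply, hab.symm] using congrFun hv b
  simpa using card_le_card_of_injOn (t := range (n + 1)) (fun v => v.1 b)
    (fun v _ => mem_range.2 (Nat.lt_succ_of_le (v.val_le b)))
    fun v hv w hw hvw => by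
      obtain ⟨ε, hε⟩ := hs v hv
      obtain ⟨ε', hε'⟩ := hs w hw
      have hεε' : ε = ε' := by have := hb hε; have := hb hε'; simp only at hvw; omega
      exact toIntVec_injective (hε.trans (hεε' ▸ hε'.symm))

lemma card_le_of_forall_eq_transfer_source {s : Finset (SRVertex m n)} {x : Fin m → ℤ}
    {a : Fin m} {δ : ℤ} (hs : ∀ v ∈ s, ∃ r, v.toIntVec = x + transfer a r δ) : #s ≤ m := calc
  #s = #(s.image toIntVec) := (card_image_of_injective _ toIntVec_injective).symm
  _ ≤ #(univ.image fun r => x + transfer a r δ) := card_le_card fun v hv => by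
    obtain ⟨w, hw, rfl⟩ := mem_image.1 hv
    simpa [eq_comm] using hs w hw
  _ ≤ m := card_image_le.trans (by simp)

theorem card_le_max_of_isClique (hm : 2 ≤ m) {s : Finset (SRVertex m n)}
    (hs : (SR m n).IsClique (s : Set (SRVertex m n))) : #s ≤ max m (n + 1) := by
  rcases le_or_gt #s 2 with h | h
  · exact le_max_of_le_left (h.trans hm)
  obtain ⟨x, hx, y, hy, z, hz, hxy, hxz, hyz⟩ := two_lt_card.1 h
  have hinj := toIntVec_injective (m := m) (n := n)
  rcases (pairwise_isTransfer_of_isClique hs).isTransfer_line_or_star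
      (Set.mem_image_of_mem _ hx) (Set.mem_image_of_mem _ hy) (Set.mem_image_of_mem _ hz)
      (hinj.ne hxy) (hinj.ne hxz) (hinj.ne hyz) with ⟨a, b, hab, hline⟩ | ⟨w, a, δ, hstar⟩
  · exact le_max_of_le_right (card_le_of_forall_eq_transfer hab
      fun v hv => hline _ (Set.mem_image_of_mem _ hv))
  · exact le_max_of_le_left (card_le_of_forall_eq_transfer_source
      fun v hv => hstar _ (Set.mem_image_of_mem _ hv))

theorem le_cliqueNum (hn : 1 ≤ n) : m ≤ (SR m n).cliqueNum := by
  cases m with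
  | zero => exact Nat.zero_le _
  | succ m =>
    let v (i : Fin (m + 1)) : SRVertex (m + 1) n :=
      ⟨Pi.single 0 (n - 1) + Pi.single i 1, by simp [sum_add_distrib]; omega⟩
    simpa using SimpleGraph.card_le_cliqueNum_of_pairwise_adj v fun i j hij =>
      SR.adj_iff.2 ⟨i, j, 1, hij, one_ne_zero, funext fun l => by
        simp [v, transfer_apply, Pi.single_apply]⟩

theorem succ_le_cliqueNum (hm : 2 ≤ m) : n + 1 ≤ (SR m n).cliqueNum := by
  let i : Fin m := ⟨0, by omega⟩
  let j : Fin m := ⟨1, by omega⟩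
  have hij : i ≠ j := by simp [i, j, Fin.ext_iff]
  let v (a : Fin (n + 1)) : SRVertex m n :=
    ⟨Pi.single i a + Pi.single j (n - a), by simp [sum_add_distrib]; omega⟩
  simpa using SimpleGraph.card_le_cliqueNum_of_pairwise_adj v fun a b hab =>
    SR.adj_iff.2 ⟨j, i, b - a, hij.symm, sub_ne_zero.2 (by simpa [Fin.ext_iff] using hab.symm),
      funext fun l => by simp [v, transfer_apply, Pi.single_apply]; split_ifs <;> omega⟩

end SR

/-- For `m ≥ 2` and `n ≥ 1`, the clique number of `SR(m,n)` is `max m (n+1)`. -/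
theorem SR_cliqueNum (m n : ℕ) (hm : 2 ≤ m) (hn : 1 ≤ n) :
    (SR m n).cliqueNum = max m (n + 1) := by
  refine le_antisymm ?_ (max_le (SR.le_cliqueNum hn) (SR.succ_le_cliqueNum hm))
  obtain ⟨s, hs⟩ := (SR m n).exists_isNClique_cliqueNum
  exact hs.card_eq ▸ SR.card_le_max_of_isClique hm hs.isClique
end

section
/- Let m ≥ 3 and n ≥ 3, and let u be a vertex of SR(m,n). Then the following are equivalent: (i) for every neighbor v of u, the number of maximal cliques of SR(m,n) containing both u and v is at most 2; (ii) u has exactly one nonzero coordinate. -/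
open Matrix Polynomial

/-!
Write an edge `uv` as `v + a • e j = u + a • e i` with `a > 0`, where `e k` is the `k`-th unit
vector. A common neighbour of `u` and `v` lies on the line `L = line u i j` of vertices
agreeing with `u` off `{i, j}`, in the star `A = inStar u i a` of vertices with
`w + a • e k = u + a • e i`, or in the star `B = outStar u j a` of vertices with
`w + a • e j = u + a • e k`. No point of `A \ L` is adjacent to a point of `B \ L`, and none
of them is adjacent to a point of `L` other than `u, v`; hence every maximal clique through
`uv` is `L`, `A` or `B`. If `u = n • e p` then `A ⊆ L`, so at most two remain. Otherwise `u`
has two nonzero coordinates and, using `m, n ≥ 3`, the edge can be chosen so that `L` has a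
third point and both `A` and `B` leave `L`, which makes all three maximal and distinct.
-/

namespace SimpleGraph

variable {V : Type*} {G : SimpleGraph V} {s : Set V}

theorem maximal_isClique_iff_forall_eq :
    Maximal G.IsClique s ↔ G.IsClique s ∧ ∀ t, G.IsClique t → s ⊆ t → s = t :=
  ⟨fun h => ⟨h.prop, fun _ ht hst => h.eq_of_subset ht hst⟩,
    fun h => ⟨h.1, fun _ ht hst => (h.2 _ ht hst).symm.subset⟩⟩

theorem maximal_isClique_of_forall_exists_not_adj (hs : G.IsClique s)
    (h : ∀ x ∉ s, ∃ y ∈ s, x ≠ y ∧ ¬G.Adj x y) : Maximal G.IsClique s := by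
  rw [Set.maximal_iff_forall_insert fun _ _ ht hst => ht.subset hst]
  refine ⟨hs, fun x hx hins => ?_⟩
  obtain ⟨y, hy, hxy, hnadj⟩ := h x hx
  exact hnadj ((isClique_insert.1 hins).2 y hy hxy)

theorem maximal_isClique_of_forall_adj_adj {u v : V} (hs : G.IsClique s) (hu : u ∈ s)
    (hv : v ∈ s)
    (h : ∀ x ∉ s, G.Adj x u → G.Adj x v → ∃ y ∈ s, x ≠ y ∧ ¬G.Adj x y) :
    Maximal G.IsClique s := by
  refine maximal_isClique_of_forall_exists_not_adj hs fun x hx => ?_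
  by_cases hxu : G.Adj x u
  · by_cases hxv : G.Adj x v
    · exact h x hx hxu hxv
    · exact ⟨v, hv, ne_of_mem_of_not_mem hv hx |>.symm, hxv⟩
  · exact ⟨u, hu, ne_of_mem_of_not_mem hu hx |>.symm, hxu⟩

end SimpleGraph

theorem Pi.add_single_eq_add_single_iff {ι : Type*} [DecidableEq ι] {x y : ι → ℕ} {k l : ι}
    {a : ℕ} (hkl : k ≠ l) :
    x + Pi.single k a = y + Pi.single l a ↔
      x k + a = y k ∧ x l = y l + a ∧ ∀ t, t ≠ k → t ≠ l → x t = y t := by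
  constructor
  · intro h
    exact ⟨by simpa [hkl] using congrFun h k, by simpa [hkl.symm] using congrFun h l,
      fun t htk htl => by simpa [htk, htl] using congrFun h t⟩
  · rintro ⟨hk, hl, hrest⟩
    funext t
    by_cases htk : t = k
    · subst htk; simp [hkl, hk]
    by_cases htl : t = l
    · subst htl; simp [htk, hl]
    simp [htk, htl, hrest t htk htl]

namespace SR

variable {m n : ℕ} {x y z u v w : SRVertex m n} {i j k : Fin m} {a : ℕ}

theorem apply_add_apply_eq (hij : i ≠ j) (h : ∀ t, t ≠ i → t ≠ j → x.1 t = y.1 t) :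
    x.1 i + x.1 j = y.1 i + y.1 j := by
  have hsplit : ∀ z : SRVertex m n,
      z.1 i + (z.1 j + ∑ t ∈ (Finset.univ.erase i).erase j, z.1 t) = n := fun z => by
    rw [Finset.add_sum_erase _ _ (by simp [hij.symm]),
      Finset.add_sum_erase _ _ (Finset.mem_univ i), z.2]
  have hrest : ∑ t ∈ (Finset.univ.erase i).erase j, x.1 t
      = ∑ t ∈ (Finset.univ.erase i).erase j, y.1 t :=
    Finset.sum_congr rfl fun t ht => by
      simp only [Finset.mem_erase] at ht
      exact h t ht.2.1 ht.1
  have := hsplit x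
  have := hsplit y
  omega

theorem eq_of_forall_ne_ne (hij : i ≠ j) (h : ∀ t, t ≠ i → t ≠ j → x.1 t = y.1 t)
    (hi : x.1 i = y.1 i) : x = y := by
  have hsum := apply_add_apply_eq hij h
  ext t
  by_cases hti : t = i
  · rwa [hti]
  by_cases htj : t = j
  · rw [htj]; omega
  exact h t hti htj

theorem adj_of_forall_ne_ne (hij : i ≠ j) (h : ∀ t, t ≠ i → t ≠ j → x.1 t = y.1 t)
    (hxy : x ≠ y) : (SR m n).Adj x y := by
  have hi : x.1 i ≠ y.1 i := fun hi => hxy (eq_of_forall_ne_ne hij h hi)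
  have hj : x.1 j ≠ y.1 j := by have := apply_add_apply_eq hij h; omega
  show (Finset.univ.filter fun t => x.1 t ≠ y.1 t).card = 2
  rw [Finset.card_eq_two]
  refine ⟨i, j, hij, Finset.ext fun t => ?_⟩
  simp only [Finset.mem_filter, Finset.mem_univ, true_and, Finset.mem_insert,
    Finset.mem_singleton]
  constructor
  · intro ht; by_contra hc; exact ht (h t (fun h' => hc (.inl h')) fun h' => hc (.inr h'))
  · rintro (rfl | rfl) <;> assumption

theorem not_adj_of_three_apply_ne (hij : i ≠ j) (hik : i ≠ k) (hjk : j ≠ k)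
    (hi : x.1 i ≠ y.1 i) (hj : x.1 j ≠ y.1 j) (hk : x.1 k ≠ y.1 k) : ¬(SR m n).Adj x y := by
  intro h
  have hcard : (Finset.univ.filter fun t => x.1 t ≠ y.1 t).card = 2 := h
  have hsub : ({i, j, k} : Finset (Fin m)) ⊆ Finset.univ.filter fun t => x.1 t ≠ y.1 t := by
    intro t ht
    simp only [Finset.mem_insert, Finset.mem_singleton] at ht
    rcases ht with rfl | rfl | rfl <;> simpa
  have := Finset.card_le_card hsub
  rw [Finset.card_insert_of_notMem (by simp [hij, hik]),
    Finset.card_insert_of_notMem (by simp [hjk]), Finset.card_singleton] at this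
  omega

theorem forall_ne_ne_of_adj (h : (SR m n).Adj x y) (hij : i ≠ j) (hi : x.1 i ≠ y.1 i)
    (hj : x.1 j ≠ y.1 j) : ∀ t, t ≠ i → t ≠ j → x.1 t = y.1 t := fun t hti htj => by
  by_contra ht
  exact not_adj_of_three_apply_ne hij (Ne.symm hti) (Ne.symm htj) hi hj ht h

theorem adj_of_add_single_eq (h : x.1 + Pi.single k a = y.1 + Pi.single i a) (hxy : x ≠ y) :
    (SR m n).Adj x y := by
  have hki : k ≠ i := by
    rintro rfl; exact hxy (Subtype.ext (add_right_cancel h))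
  exact adj_of_forall_ne_ne hki ((Pi.add_single_eq_add_single_iff hki).1 h).2.2 hxy

theorem exists_add_single_eq_of_adj (h : (SR m n).Adj u v) :
    ∃ i j a, i ≠ j ∧ 0 < a ∧ v.1 + Pi.single j a = u.1 + Pi.single i a := by
  obtain ⟨p, q, hpq, hpq'⟩ := Finset.card_eq_two.1 h
  have hmem : ∀ t, u.1 t ≠ v.1 t ↔ t = p ∨ t = q := fun t => by
    simpa using Finset.ext_iff.1 hpq' t
  have hp := (hmem p).2 (.inl rfl)
  have hrest : ∀ t, t ≠ p → t ≠ q → v.1 t = u.1 t := fun t htp htq => by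
    by_contra ht; exact ((hmem t).1 (Ne.symm ht)).elim htp htq
  have hsum := apply_add_apply_eq hpq hrest
  rcases Nat.lt_or_gt_of_ne hp with hlt | hgt
  · refine ⟨p, q, v.1 p - u.1 p, hpq, by omega, ?_⟩
    rw [Pi.add_single_eq_add_single_iff hpq.symm]
    exact ⟨by omega, by omega, fun t htq htp => hrest t htp htq⟩
  · refine ⟨q, p, u.1 p - v.1 p, hpq.symm, by omega, ?_⟩
    rw [Pi.add_single_eq_add_single_iff hpq]
    exact ⟨by omega, by omega, hrest⟩

theorem exists_add_single_eq (u : SRVertex m n) (hj : a ≤ u.1 j) (i : Fin m) :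
    ∃ v : SRVertex m n, v.1 + Pi.single j a = u.1 + Pi.single i a := by
  set f := u.1 + Pi.single i a - Pi.single j a
  have hf : f + Pi.single j a = u.1 + Pi.single i a := by
    funext t
    simp only [f, Pi.add_apply, Pi.sub_apply, Pi.single_apply]
    split_ifs <;> subst_vars <;> omega
  have hsum := congrArg (fun g => ∑ t, g t) hf
  simp only [Pi.add_apply, Finset.sum_add_distrib, Finset.sum_pi_single', Finset.mem_univ,
    if_true, u.2] at hsum
  exact ⟨⟨f, by omega⟩, hf⟩

def line (u : SRVertex m n) (i j : Fin m) : Set (SRVertex m n) :=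
  {w | ∀ t, t ≠ i → t ≠ j → w.1 t = u.1 t}

def inStar (u : SRVertex m n) (i : Fin m) (a : ℕ) : Set (SRVertex m n) :=
  {w | ∃ k, w.1 + Pi.single k a = u.1 + Pi.single i a}

def outStar (u : SRVertex m n) (j : Fin m) (a : ℕ) : Set (SRVertex m n) :=
  {w | ∃ k, w.1 + Pi.single j a = u.1 + Pi.single k a}

theorem mem_line_self : u ∈ line u i j := fun _ _ _ => rfl

theorem mem_inStar_self : u ∈ inStar u i a := ⟨i, rfl⟩

theorem mem_outStar_self : u ∈ outStar u j a := ⟨j, rfl⟩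

theorem line_comm : line u i j = line u j i :=
  Set.ext fun _ => ⟨fun h t htj hti => h t hti htj, fun h t hti htj => h t htj hti⟩

theorem mem_line_of_add_single_eq (hv : v.1 + Pi.single j a = u.1 + Pi.single i a) :
    v ∈ line u i j := fun t hti htj => by
  simpa [Pi.single_apply, hti, htj] using congrFun hv t

theorem mem_inStar_of_add_single_eq (hv : v.1 + Pi.single j a = u.1 + Pi.single i a) :
    v ∈ inStar u i a := ⟨j, hv⟩

theorem mem_outStar_of_add_single_eq (hv : v.1 + Pi.single j a = u.1 + Pi.single i a) :
    v ∈ outStar u j a := ⟨i, hv⟩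

theorem isClique_line (hij : i ≠ j) : (SR m n).IsClique (line u i j) :=
  fun _ hx _ hy hxy =>
    adj_of_forall_ne_ne hij (fun t hti htj => (hx t hti htj).trans (hy t hti htj).symm) hxy

theorem isClique_inStar : (SR m n).IsClique (inStar u i a) := by
  rintro x ⟨k, hx⟩ y ⟨l, hy⟩ hxy
  exact adj_of_add_single_eq (hx.trans hy.symm) hxy

theorem isClique_outStar : (SR m n).IsClique (outStar u j a) := by
  rintro x ⟨k, hx⟩ y ⟨l, hy⟩ hxy
  have h : x.1 + Pi.single l a = y.1 + Pi.single k a := add_right_cancel (b := Pi.single j a) <|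
    calc x.1 + Pi.single l a + Pi.single j a = u.1 + Pi.single k a + Pi.single l a := by
          rw [add_right_comm, hx]
      _ = y.1 + Pi.single k a + Pi.single j a := by rw [add_right_comm y.1, hy, add_right_comm]
  exact adj_of_add_single_eq h hxy

theorem apply_ne_of_mem_line (hij : i ≠ j) (hx : x ∈ line u i j) (hy : y ∈ line u i j)
    (hxy : x ≠ y) : x.1 i ≠ y.1 i ∧ x.1 j ≠ y.1 j := by
  have hxy' : ∀ t, t ≠ i → t ≠ j → x.1 t = y.1 t := fun t hti htj =>
    (hx t hti htj).trans (hy t hti htj).symm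
  exact ⟨fun h => hxy (eq_of_forall_ne_ne hij hxy' h),
    fun h => hxy (eq_of_forall_ne_ne hij.symm (fun t htj hti => hxy' t hti htj) h)⟩

theorem exists_apply_ne_of_not_mem_line (hw : w ∉ line u i j) :
    ∃ k, k ≠ i ∧ k ≠ j ∧ w.1 k ≠ u.1 k := by
  simpa [line] using hw

theorem apply_le_of_mem_inStar (hw : w ∈ inStar u i a) {t : Fin m} (ht : t ≠ i) :
    w.1 t ≤ u.1 t := by
  obtain ⟨k, hk⟩ := hw
  have := congrFun hk t
  simp only [Pi.add_apply, Pi.single_apply, ht, if_false] at this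
  omega

theorem le_apply_of_mem_outStar (hw : w ∈ outStar u j a) {t : Fin m} (ht : t ≠ j) :
    u.1 t ≤ w.1 t := by
  obtain ⟨k, hk⟩ := hw
  have := congrFun hk t
  simp only [Pi.add_apply, Pi.single_apply, ht, if_false] at this
  omega

theorem apply_of_mem_inStar_of_not_mem_line (hij : i ≠ j) (hw : w ∈ inStar u i a)
    (hwL : w ∉ line u i j) : w.1 i = u.1 i + a ∧ w.1 j = u.1 j := by
  obtain ⟨k, hk⟩ := hw
  have hki : k ≠ i := by
    rintro rfl; exact hwL fun t _ _ => congrFun (add_right_cancel hk) t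
  obtain ⟨-, hi, hrest⟩ := (Pi.add_single_eq_add_single_iff hki).1 hk
  have hkj : k ≠ j := by
    rintro rfl; exact hwL fun t hti htk => hrest t htk hti
  exact ⟨hi, hrest j hkj.symm hij.symm⟩

theorem apply_of_mem_outStar_of_not_mem_line (hij : i ≠ j) (hw : w ∈ outStar u j a)
    (hwL : w ∉ line u i j) : w.1 i = u.1 i ∧ w.1 j + a = u.1 j := by
  obtain ⟨k, hk⟩ := hw
  have hkj : k ≠ j := by
    rintro rfl; exact hwL fun t _ _ => congrFun (add_right_cancel hk) t
  obtain ⟨hj, -, hrest⟩ := (Pi.add_single_eq_add_single_iff hkj.symm).1 hk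
  have hki : k ≠ i := by
    rintro rfl; exact hwL fun t hti htj => hrest t htj hti
  exact ⟨hrest i hij hki.symm, hj⟩

theorem mem_line_or_mem_inStar_or_mem_outStar (hij : i ≠ j) (ha : 0 < a)
    (hv : v.1 + Pi.single j a = u.1 + Pi.single i a) (huw : (SR m n).Adj u w)
    (hvw : (SR m n).Adj v w) : w ∈ line u i j ∨ w ∈ inStar u i a ∨ w ∈ outStar u j a := by
  rw [or_iff_not_imp_left]
  intro hwL
  obtain ⟨k, hki, hkj, hk⟩ := exists_apply_ne_of_not_mem_line hwL
  obtain ⟨hvj, hvi, hvrest⟩ := (Pi.add_single_eq_add_single_iff hij.symm).1 hv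
  have hvk := hvrest k hkj hki
  -- `w` differs from both `u` and `v` at `k`, and from exactly one of them at `i`.
  by_cases hwi : w.1 i = u.1 i
  · have hvw' := forall_ne_ne_of_adj hvw hki.symm (by omega) (by omega)
    have hwj := hvw' j hij.symm hkj.symm
    have huw' := forall_ne_ne_of_adj huw hkj.symm (by omega) (by omega)
    have hsum := apply_add_apply_eq hkj.symm huw'
    exact .inr ⟨k, (Pi.add_single_eq_add_single_iff hkj.symm).2
      ⟨by omega, by omega, fun t htj htk => (huw' t htj htk).symm⟩⟩
  · have huw' := forall_ne_ne_of_adj huw hki.symm (Ne.symm hwi) (by omega)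
    have hwj := huw' j hij.symm hkj.symm
    have hvw' := forall_ne_ne_of_adj hvw hkj.symm (by omega) (by omega)
    have hwi' := hvw' i hij hki.symm
    have hsum := apply_add_apply_eq hki.symm huw'
    exact .inl ⟨k, (Pi.add_single_eq_add_single_iff hki).2
      ⟨by omega, by omega, fun t htk hti => (huw' t hti htk).symm⟩⟩

theorem not_adj_of_mem_line_of_mem_inStar (hij : i ≠ j)
    (hv : v.1 + Pi.single j a = u.1 + Pi.single i a) (hx : x ∈ line u i j) (hxu : x ≠ u)
    (hxv : x ≠ v) (hw : w ∈ inStar u i a) (hwL : w ∉ line u i j) : ¬(SR m n).Adj x w := by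
  obtain ⟨k, hki, hkj, hk⟩ := exists_apply_ne_of_not_mem_line hwL
  obtain ⟨hwi, hwj⟩ := apply_of_mem_inStar_of_not_mem_line hij hw hwL
  have hvi : v.1 i = u.1 i + a := by simpa [hij] using congrFun hv i
  refine not_adj_of_three_apply_ne hij hki.symm hkj.symm ?_ ?_ ?_
  · rw [hwi, ← hvi]
    exact (apply_ne_of_mem_line hij hx (mem_line_of_add_single_eq hv) hxv).1
  · rw [hwj]; exact (apply_ne_of_mem_line hij hx mem_line_self hxu).2
  · rw [hx k hki hkj]; exact Ne.symm hk

theorem not_adj_of_mem_line_of_mem_outStar (hij : i ≠ j)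
    (hv : v.1 + Pi.single j a = u.1 + Pi.single i a) (hx : x ∈ line u i j) (hxu : x ≠ u)
    (hxv : x ≠ v) (hw : w ∈ outStar u j a) (hwL : w ∉ line u i j) : ¬(SR m n).Adj x w := by
  obtain ⟨k, hki, hkj, hk⟩ := exists_apply_ne_of_not_mem_line hwL
  obtain ⟨hwi, hwj⟩ := apply_of_mem_outStar_of_not_mem_line hij hw hwL
  have hvj : v.1 j + a = u.1 j := by simpa [hij.symm] using congrFun hv j
  refine not_adj_of_three_apply_ne hij hki.symm hkj.symm ?_ ?_ ?_
  · rw [hwi]; exact (apply_ne_of_mem_line hij hx mem_line_self hxu).1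
  · rw [show w.1 j = v.1 j by omega]
    exact (apply_ne_of_mem_line hij hx (mem_line_of_add_single_eq hv) hxv).2
  · rw [hx k hki hkj]; exact Ne.symm hk

theorem not_adj_of_mem_inStar_of_mem_outStar (hij : i ≠ j) (ha : 0 < a)
    (hx : x ∈ inStar u i a) (hxL : x ∉ line u i j) (hy : y ∈ outStar u j a)
    (hyL : y ∉ line u i j) : ¬(SR m n).Adj x y := by
  obtain ⟨k, hki, hkj, hk⟩ := exists_apply_ne_of_not_mem_line hxL
  obtain ⟨hxi, hxj⟩ := apply_of_mem_inStar_of_not_mem_line hij hx hxL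
  obtain ⟨hyi, hyj⟩ := apply_of_mem_outStar_of_not_mem_line hij hy hyL
  have hxk := apply_le_of_mem_inStar hx hki
  have hyk := le_apply_of_mem_outStar hy hkj
  exact not_adj_of_three_apply_ne hij hki.symm hkj.symm
    (by omega) (by omega) (by omega)

theorem maximal_line (hij : i ≠ j) (ha : 0 < a)
    (hv : v.1 + Pi.single j a = u.1 + Pi.single i a) (hz : z ∈ line u i j) (hzu : z ≠ u)
    (hzv : z ≠ v) : Maximal (SR m n).IsClique (line u i j) := by
  refine (SR m n).maximal_isClique_of_forall_adj_adj (isClique_line hij) mem_line_self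
    (mem_line_of_add_single_eq hv) fun x hxL hxu hxv =>
      ⟨z, hz, ne_of_mem_of_not_mem hz hxL |>.symm, ?_⟩
  rcases (mem_line_or_mem_inStar_or_mem_outStar hij ha hv hxu.symm hxv.symm).resolve_left hxL
    with hxA | hxB
  · exact fun h => not_adj_of_mem_line_of_mem_inStar hij hv hz hzu hzv hxA hxL h.symm
  · exact fun h => not_adj_of_mem_line_of_mem_outStar hij hv hz hzu hzv hxB hxL h.symm

theorem maximal_inStar (hij : i ≠ j) (ha : 0 < a)
    (hv : v.1 + Pi.single j a = u.1 + Pi.single i a) (hw : w ∈ inStar u i a)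
    (hwL : w ∉ line u i j) : Maximal (SR m n).IsClique (inStar u i a) := by
  refine (SR m n).maximal_isClique_of_forall_adj_adj isClique_inStar mem_inStar_self
    (mem_inStar_of_add_single_eq hv) fun x hxA hxu hxv =>
      ⟨w, hw, ne_of_mem_of_not_mem hw hxA |>.symm, ?_⟩
  by_cases hxL : x ∈ line u i j
  · exact not_adj_of_mem_line_of_mem_inStar hij hv hxL
      (ne_of_mem_of_not_mem mem_inStar_self hxA).symm
      (ne_of_mem_of_not_mem (mem_inStar_of_add_single_eq hv) hxA).symm hw hwL
  · have hxB := ((mem_line_or_mem_inStar_or_mem_outStar hij ha hv hxu.symm hxv.symm).resolve_left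
      hxL).resolve_left hxA
    exact fun h => not_adj_of_mem_inStar_of_mem_outStar hij ha hw hwL hxB hxL h.symm

theorem maximal_outStar (hij : i ≠ j) (ha : 0 < a)
    (hv : v.1 + Pi.single j a = u.1 + Pi.single i a) (hw : w ∈ outStar u j a)
    (hwL : w ∉ line u i j) : Maximal (SR m n).IsClique (outStar u j a) := by
  refine (SR m n).maximal_isClique_of_forall_adj_adj isClique_outStar mem_outStar_self
    (mem_outStar_of_add_single_eq hv) fun x hxB hxu hxv =>
      ⟨w, hw, ne_of_mem_of_not_mem hw hxB |>.symm, ?_⟩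
  by_cases hxL : x ∈ line u i j
  · exact not_adj_of_mem_line_of_mem_outStar hij hv hxL
      (ne_of_mem_of_not_mem mem_outStar_self hxB).symm
      (ne_of_mem_of_not_mem (mem_outStar_of_add_single_eq hv) hxB).symm hw hwL
  · have hxA := ((mem_line_or_mem_inStar_or_mem_outStar hij ha hv hxu.symm hxv.symm).resolve_left
      hxL).resolve_right hxB
    exact not_adj_of_mem_inStar_of_mem_outStar hij ha hxA hxL hw hwL

theorem eq_line_or_eq_inStar_or_eq_outStar (hij : i ≠ j) (ha : 0 < a)
    (hv : v.1 + Pi.single j a = u.1 + Pi.single i a) {S : Set (SRVertex m n)}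
    (hS : Maximal (SR m n).IsClique S) (huS : u ∈ S) (hvS : v ∈ S) :
    S = line u i j ∨ S = inStar u i a ∨ S = outStar u j a := by
  by_cases hSL : S ⊆ line u i j
  · exact .inl (hS.eq_of_subset (isClique_line hij) hSL)
  obtain ⟨w, hwS, hwL⟩ := Set.not_subset.1 hSL
  have hstar : ∀ x ∈ S, x ∉ line u i j → x ∈ inStar u i a ∨ x ∈ outStar u j a :=
    fun x hxS hxL => (mem_line_or_mem_inStar_or_mem_outStar hij ha hv
      (hS.prop huS hxS (ne_of_mem_of_not_mem mem_line_self hxL))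
      (hS.prop hvS hxS (ne_of_mem_of_not_mem (mem_line_of_add_single_eq hv) hxL))).resolve_left hxL
  have hline : ∀ x ∈ S, x ∈ line u i j → x = u ∨ x = v := fun x hxS hxL => by
    by_contra! hx
    have hxw := hS.prop hxS hwS (ne_of_mem_of_not_mem hxL hwL)
    rcases hstar w hwS hwL with hwA | hwB
    · exact not_adj_of_mem_line_of_mem_inStar hij hv hxL hx.1 hx.2 hwA hwL hxw
    · exact not_adj_of_mem_line_of_mem_outStar hij hv hxL hx.1 hx.2 hwB hwL hxw
  rcases hstar w hwS hwL with hwA | hwB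
  · refine .inr (.inl (hS.eq_of_subset isClique_inStar fun x hxS => ?_))
    by_cases hxL : x ∈ line u i j
    · rcases hline x hxS hxL with rfl | rfl
      exacts [mem_inStar_self, mem_inStar_of_add_single_eq hv]
    by_cases hxw : x = w
    · exact hxw ▸ hwA
    exact (hstar x hxS hxL).resolve_right fun hxB =>
      not_adj_of_mem_inStar_of_mem_outStar hij ha hwA hwL hxB hxL (hS.prop hwS hxS (Ne.symm hxw))
  · refine .inr (.inr (hS.eq_of_subset isClique_outStar fun x hxS => ?_))
    by_cases hxL : x ∈ line u i j
    · rcases hline x hxS hxL with rfl | rfl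
      exacts [mem_outStar_self, mem_outStar_of_add_single_eq hv]
    by_cases hxw : x = w
    · exact hxw ▸ hwB
    exact (hstar x hxS hxL).resolve_left fun hxA =>
      not_adj_of_mem_inStar_of_mem_outStar hij ha hxA hxL hwB hwL (hS.prop hxS hwS hxw)

theorem inStar_subset_line (hu : ∀ t, t ≠ j → u.1 t = 0) : inStar u i a ⊆ line u i j :=
  fun _ hw t hti htj => by
    have := apply_le_of_mem_inStar hw hti
    rw [hu t htj] at this ⊢
    omega

theorem exists_mem_line_apply_eq (hij : i ≠ j) {b : ℕ} (hb : b ≤ u.1 i + u.1 j) :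
    ∃ z ∈ line u i j, z.1 i = b := by
  rcases le_total b (u.1 i) with hbi | hbi
  · obtain ⟨z, hz⟩ := exists_add_single_eq u (j := i) (a := u.1 i - b) (by omega) j
    refine ⟨z, line_comm ▸ mem_line_of_add_single_eq hz, ?_⟩
    have := congrFun hz i
    simp only [Pi.add_apply, Pi.single_eq_same, Pi.single_eq_of_ne hij] at this
    omega
  · obtain ⟨z, hz⟩ := exists_add_single_eq u (j := j) (a := b - u.1 i) (by omega) i
    refine ⟨z, mem_line_of_add_single_eq hz, ?_⟩
    have := congrFun hz i
    simp only [Pi.add_apply, Pi.single_eq_same, Pi.single_eq_of_ne hij] at this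
    omega

theorem exists_mem_line_ne_ne (hij : i ≠ j) (h2 : 2 ≤ u.1 i + u.1 j) (x y : SRVertex m n) :
    ∃ z ∈ line u i j, z ≠ x ∧ z ≠ y := by
  obtain ⟨b, hb, hbx, hby⟩ : ∃ b ≤ 2, b ≠ x.1 i ∧ b ≠ y.1 i := by
    by_contra! h
    have := h 0; have := h 1; have := h 2
    omega
  obtain ⟨z, hz, hzi⟩ := exists_mem_line_apply_eq hij (hb.trans h2)
  exact ⟨z, hz, by rintro rfl; exact hbx hzi.symm, by rintro rfl; exact hby hzi.symm⟩

theorem ncard_maximal_isClique_le_two {p : Fin m} (hu : ∀ t, t ≠ p → u.1 t = 0)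
    (huv : (SR m n).Adj u v) :
    {S | Maximal (SR m n).IsClique S ∧ u ∈ S ∧ v ∈ S}.ncard ≤ 2 := by
  obtain ⟨i, j, a, hij, ha, hv⟩ := exists_add_single_eq_of_adj huv
  obtain rfl : j = p := by
    by_contra hjp
    have := congrFun hv j
    simp only [Pi.add_apply, Pi.single_eq_same, Pi.single_eq_of_ne hij.symm, hu j hjp] at this
    omega
  calc _ ≤ ({line u i j, outStar u j a} : Set (Set (SRVertex m n))).ncard :=
        Set.ncard_le_ncard fun S hS' => by
          obtain ⟨hS, huS, hvS⟩ := hS'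
          rcases eq_line_or_eq_inStar_or_eq_outStar hij ha hv hS huS hvS with h | h | h
          · exact .inl h
          · exact .inl (hS.eq_of_subset (isClique_line hij) (h ▸ inStar_subset_line hu))
          · exact .inr h
    _ ≤ 2 := (Set.ncard_insert_le _ _).trans (by rw [Set.ncard_singleton])

theorem two_lt_ncard_maximal_isClique (hij : i ≠ j) (ha : 0 < a)
    (hv : v.1 + Pi.single j a = u.1 + Pi.single i a) (h2 : 2 ≤ u.1 i + u.1 j) (hki : k ≠ i)
    (hkj : k ≠ j) (hk : a ≤ u.1 k) :
    2 < {S | Maximal (SR m n).IsClique S ∧ u ∈ S ∧ v ∈ S}.ncard := by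
  obtain ⟨z, hzL, hzu, hzv⟩ := exists_mem_line_ne_ne hij h2 u v
  have hvj : v.1 j + a = u.1 j := by simpa [hij.symm] using congrFun hv j
  obtain ⟨w₁, hw₁⟩ := exists_add_single_eq u hk i
  obtain ⟨w₀, hw₀⟩ := exists_add_single_eq u (j := j) (a := a) (by omega) k
  have hw₁L : w₁ ∉ line u i j := fun h => by
    have := congrFun hw₁ k
    simp only [Pi.add_apply, Pi.single_eq_same, Pi.single_eq_of_ne hki, h k hki hkj] at this
    omega
  have hw₀L : w₀ ∉ line u i j := fun h => by
    have := congrFun hw₀ k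
    simp only [Pi.add_apply, Pi.single_eq_same, Pi.single_eq_of_ne hkj, h k hki hkj] at this
    omega
  have hw₁B : w₁ ∉ outStar u j a := fun h => by
    have := (apply_of_mem_inStar_of_not_mem_line hij ⟨k, hw₁⟩ hw₁L).1
    have := (apply_of_mem_outStar_of_not_mem_line hij h hw₁L).1
    omega
  have hsub : {line u i j, inStar u i a, outStar u j a} ⊆
      {S | Maximal (SR m n).IsClique S ∧ u ∈ S ∧ v ∈ S} := by
    rintro S (rfl | rfl | rfl)
    · exact ⟨maximal_line hij ha hv hzL hzu hzv, mem_line_self, mem_line_of_add_single_eq hv⟩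
    · exact ⟨maximal_inStar hij ha hv ⟨k, hw₁⟩ hw₁L, mem_inStar_self,
        mem_inStar_of_add_single_eq hv⟩
    · exact ⟨maximal_outStar hij ha hv ⟨k, hw₀⟩ hw₀L, mem_outStar_self,
        mem_outStar_of_add_single_eq hv⟩
  have h3 : ({line u i j, inStar u i a, outStar u j a} : Set (Set (SRVertex m n))).ncard = 3 :=
    Set.ncard_eq_three.2 ⟨_, _, _, fun h => hw₁L (by rw [h]; exact ⟨k, hw₁⟩),
      fun h => hw₀L (by rw [h]; exact ⟨k, hw₀⟩),
      fun h => hw₁B (by rw [← h]; exact ⟨k, hw₁⟩), rfl⟩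
  have := Set.ncard_le_ncard hsub
  omega

theorem exists_coords_of_card_ne_one (hm : 3 ≤ m) (hn : 3 ≤ n) (u : SRVertex m n)
    (hu : (Finset.univ.filter fun t => u.1 t ≠ 0).card ≠ 1) :
    ∃ i j k, i ≠ j ∧ k ≠ i ∧ k ≠ j ∧
      1 ≤ u.1 j ∧ 1 ≤ u.1 k ∧ 2 ≤ u.1 i + u.1 j := by
  have hne : (Finset.univ.filter fun t => u.1 t ≠ 0).Nonempty := by
    obtain ⟨t, -, ht⟩ := Finset.exists_ne_zero_of_sum_ne_zero (u.2.trans_ne (by omega))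
    exact ⟨t, by simpa using ht⟩
  have h1 : 1 < (Finset.univ.filter fun t => u.1 t ≠ 0).card := by
    have := hne.card_pos; omega
  obtain ⟨p, hp, q, hq, hpq⟩ := Finset.one_lt_card.1 h1
  simp only [Finset.mem_filter, Finset.mem_univ, true_and] at hp hq
  by_cases hr : ∃ r, r ≠ p ∧ r ≠ q ∧ u.1 r ≠ 0
  · obtain ⟨r, hrp, hrq, hr⟩ := hr
    exact ⟨p, q, r, hpq, hrp, hrq, by omega, by omega, by omega⟩
  push Not at hr
  have hsum : u.1 p + u.1 q = n :=
    (Fintype.sum_eq_add p q hpq fun r h => hr r h.1 h.2).symm.trans u.2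
  obtain ⟨r, hrp, hrq⟩ := Fin.exists_ne_and_ne_of_two_lt p q (by omega)
  rcases le_or_gt 2 (u.1 q) with hq2 | hq2
  · exact ⟨r, q, p, hrq, hrp.symm, hpq, by omega, by omega, by omega⟩
  · exact ⟨r, p, q, hrp, hrq.symm, hpq.symm, by omega, by omega, by omega⟩

end SR

/-- For `m, n ≥ 3` and a vertex `u` of `SR(m,n)`: every neighbor `v` of `u` lies in at
most two maximal cliques containing `u` if and only if `u` has exactly one nonzero
coordinate. -/
theorem SR_local_maximal_cliques (m n : ℕ) (hm : 3 ≤ m) (hn : 3 ≤ n)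
    (u : SRVertex m n) :
    (∀ v : SRVertex m n, (SR m n).Adj u v →
        {S : Set (SRVertex m n) | (SR m n).IsClique S ∧
          (∀ T : Set (SRVertex m n), (SR m n).IsClique T → S ⊆ T → S = T) ∧
          u ∈ S ∧ v ∈ S}.ncard ≤ 2)
      ↔ (Finset.univ.filter fun j => u.1 j ≠ 0).card = 1 := by
  simp only [← and_assoc, ← SimpleGraph.maximal_isClique_iff_forall_eq]
  simp only [and_assoc]
  constructor
  · intro h
    by_contra hu
    obtain ⟨i, j, k, hij, hki, hkj, hj, hk, h2⟩ := SR.exists_coords_of_card_ne_one hm hn u hu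
    obtain ⟨v, hv⟩ := SR.exists_add_single_eq u hj i
    have hvu : v ≠ u := by rintro rfl; simpa [hij] using congrFun hv i
    have huv := (SR.adj_of_add_single_eq hv hvu).symm
    exact (h v huv).not_gt (SR.two_lt_ncard_maximal_isClique hij one_pos hv h2 hki hkj hk)
  · intro hu v huv
    obtain ⟨p, hp⟩ := Finset.card_eq_one.1 hu
    refine SR.ncard_maximal_isClique_le_two (p := p) (fun t htp => ?_) huv
    by_contra ht
    exact htp (Finset.eq_singleton_iff_unique_mem.1 hp |>.2 t (by simpa using ht))
end
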